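/- Let T : X → X be a continuous map of a compact metric space, U a finite open cover of X, and K, n ∈ ℕ with K ≥ 1. Let R₁,…,R_K be finite Borel partitions of X, each refining U. Then there exists a subset B ⊆ X of cardinality at least ⌊N(⋁_{i=0}^{n-1}T⁻ⁱU)/K⌋ such that for every l ∈ {1,…,K}, each atom of ⋁_{i=0}^{n-1}T⁻ⁱR_l contains at most one point of B. -/
import Mathlib


open MeasureTheory Set Filter Topology

noncomputable section

/-- `U` is a cover of the whole space. -/
def IsCover {X : Type*} (U : Finset (Set X)) : Prop := ⋃₀ (U : Set (Set X)) = Set.univ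

/-- `R` refines `U`: every element of `R` is contained in some element of `U`. -/
def Refines {X : Type*} (R U : Finset (Set X)) : Prop := ∀ A ∈ R, ∃ B ∈ U, A ⊆ B

/-- `R` is a partition of the whole space. -/
def IsPartition {X : Type*} (R : Finset (Set X)) : Prop :=
  IsCover R ∧ ∀ A ∈ R, ∀ B ∈ R, A ≠ B → Disjoint A B

/-- `R` is a partition into Borel (measurable) sets. -/
def IsBorelPartition {X : Type*} [MeasurableSpace X] (R : Finset (Set X)) : Prop :=
  IsPartition R ∧ ∀ A ∈ R, MeasurableSet A

/-- Join of two finite families of sets: `U ∨ V = {A ∩ B}`. -/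
def coverJoin {X : Type*} (U V : Finset (Set X)) : Finset (Set X) :=
  letI := Classical.decEq (Set X)
  (U ×ˢ V).image fun p => p.1 ∩ p.2

/-- Preimage of a finite family of sets under a map. -/
def coverPre {Y X : Type*} (g : Y → X) (U : Finset (Set X)) : Finset (Set Y) :=
  letI := Classical.decEq (Set Y)
  U.image fun A => g ⁻¹' A

/-- `dynJoin T U n = ⋁_{i=0}^{n-1} T⁻ⁱ U`. -/
def dynJoin {X : Type*} (T : X → X) (U : Finset (Set X)) : ℕ → Finset (Set X)
  | 0 => {Set.univ}
  | n + 1 => coverJoin (dynJoin T U n) (coverPre (T^[n]) U)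

/-- Minimal cardinality of a subcover of `W`. -/
def coverNum {X : Type*} (W : Finset (Set X)) : ℕ :=
  sInf {n | ∃ F : Finset (Set X), F ⊆ W ∧ F.card = n ∧ ⋃₀ (F : Set (Set X)) = Set.univ}

/-- Shannon entropy of a finite family of sets (convention `0 log 0 = 0`). -/
def partEnt {X : Type*} [MeasurableSpace X] (μ : Measure X) (R : Finset (Set X)) : ℝ :=
  -∑ A ∈ R, (μ A).toReal * Real.log (μ A).toReal

/-- Entropy of a cover: infimum of entropies of Borel partitions refining it. -/
def coverEnt {X : Type*} [MeasurableSpace X] (μ : Measure X) (U : Finset (Set X)) : ℝ :=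
  sInf {h | ∃ R : Finset (Set X), IsBorelPartition R ∧ Refines R U ∧ h = partEnt μ R}

end

section aux

variable {X Y : Type*}

lemma isCover_iff {W : Finset (Set X)} : IsCover W ↔ ∀ x : X, ∃ A ∈ W, x ∈ A := by
  simp [IsCover, Set.sUnion_eq_univ_iff]

lemma mem_coverJoin {U V : Finset (Set X)} {S : Set X} :
    S ∈ coverJoin U V ↔ ∃ A ∈ U, ∃ B ∈ V, S = A ∩ B := by
  classical
  constructor
  · intro h
    simp only [coverJoin, Finset.mem_image, Finset.mem_product] at h
    obtain ⟨⟨a, b⟩, ⟨ha, hb⟩, rfl⟩ := h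
    exact ⟨a, ha, b, hb, rfl⟩
  · rintro ⟨a, ha, b, hb, rfl⟩
    simp only [coverJoin, Finset.mem_image, Finset.mem_product]
    exact ⟨⟨a, b⟩, ⟨ha, hb⟩, rfl⟩

lemma mem_coverPre {g : Y → X} {U : Finset (Set X)} {S : Set Y} :
    S ∈ coverPre g U ↔ ∃ A ∈ U, S = g ⁻¹' A := by
  classical
  constructor
  · intro h
    simp only [coverPre, Finset.mem_image] at h
    obtain ⟨a, ha, rfl⟩ := h
    exact ⟨a, ha, rfl⟩
  · rintro ⟨a, ha, rfl⟩
    simp only [coverPre, Finset.mem_image]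
    exact ⟨a, ha, rfl⟩

lemma isPartition_coverJoin {U V : Finset (Set X)}
    (hU : IsPartition U) (hV : IsPartition V) : IsPartition (coverJoin U V) := by
  constructor
  · rw [isCover_iff]
    intro x
    obtain ⟨A, hA, hxA⟩ := isCover_iff.mp hU.1 x
    obtain ⟨B, hB, hxB⟩ := isCover_iff.mp hV.1 x
    exact ⟨A ∩ B, mem_coverJoin.mpr ⟨A, hA, B, hB, rfl⟩, hxA, hxB⟩
  · intro S hS S' hS' hne
    obtain ⟨A, hA, B, hB, rfl⟩ := mem_coverJoin.mp hS
    obtain ⟨A', hA', B', hB', rfl⟩ := mem_coverJoin.mp hS'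
    by_cases hAA : A = A'
    · by_cases hBB : B = B'
      · exact absurd (by rw [hAA, hBB]) hne
      · exact Set.disjoint_of_subset Set.inter_subset_right Set.inter_subset_right
          (hV.2 B hB B' hB' hBB)
    · exact Set.disjoint_of_subset Set.inter_subset_left Set.inter_subset_left
        (hU.2 A hA A' hA' hAA)

lemma isPartition_coverPre {g : Y → X} {U : Finset (Set X)}
    (hU : IsPartition U) : IsPartition (coverPre g U) := by
  constructor
  · rw [isCover_iff]
    intro y
    obtain ⟨A, hA, hyA⟩ := isCover_iff.mp hU.1 (g y)
    exact ⟨g ⁻¹' A, mem_coverPre.mpr ⟨A, hA, rfl⟩, hyA⟩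
  · intro S hS S' hS' hne
    obtain ⟨A, hA, rfl⟩ := mem_coverPre.mp hS
    obtain ⟨A', hA', rfl⟩ := mem_coverPre.mp hS'
    have hAA : A ≠ A' := fun h => hne (by rw [h])
    exact (hU.2 A hA A' hA' hAA).preimage g

lemma isPartition_dynJoin (T : X → X) {U : Finset (Set X)} (hU : IsPartition U) (n : ℕ) :
    IsPartition (dynJoin T U n) := by
  induction n with
  | zero =>
    constructor
    · rw [isCover_iff]
      intro x
      exact ⟨Set.univ, Finset.mem_singleton_self _, Set.mem_univ x⟩
    · intro A hA B hB hne
      simp only [dynJoin, Finset.mem_singleton] at hA hB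
      exact absurd (hA.trans hB.symm) hne
  | succ m ih =>
    exact isPartition_coverJoin ih (isPartition_coverPre hU)

lemma refines_coverJoin {R R' U U' : Finset (Set X)}
    (h : Refines R U) (h' : Refines R' U') : Refines (coverJoin R R') (coverJoin U U') := by
  intro S hS
  obtain ⟨A, hA, B, hB, rfl⟩ := mem_coverJoin.mp hS
  obtain ⟨A', hA', hAA⟩ := h A hA
  obtain ⟨B', hB', hBB⟩ := h' B hB
  exact ⟨A' ∩ B', mem_coverJoin.mpr ⟨A', hA', B', hB', rfl⟩,
    Set.inter_subset_inter hAA hBB⟩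

lemma refines_coverPre {g : Y → X} {R U : Finset (Set X)}
    (h : Refines R U) : Refines (coverPre g R) (coverPre g U) := by
  intro S hS
  obtain ⟨A, hA, rfl⟩ := mem_coverPre.mp hS
  obtain ⟨A', hA', hAA⟩ := h A hA
  exact ⟨g ⁻¹' A', mem_coverPre.mpr ⟨A', hA', rfl⟩, Set.preimage_mono hAA⟩

lemma refines_dynJoin (T : X → X) {R U : Finset (Set X)} (h : Refines R U) (n : ℕ) :
    Refines (dynJoin T R n) (dynJoin T U n) := by
  induction n with
  | zero =>
    intro A hA
    rw [dynJoin, Finset.mem_singleton] at hA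
    exact ⟨Set.univ, Finset.mem_singleton_self _, hA ▸ subset_rfl⟩
  | succ m ih =>
    exact refines_coverJoin ih (refines_coverPre h)

end aux

theorem stmt13 {X : Type*} [MetricSpace X] [CompactSpace X]
    [MeasurableSpace X] [BorelSpace X]
    (T : X → X) (hT : Continuous T)
    (U : Finset (Set X)) (hUo : ∀ A ∈ U, IsOpen A) (hUc : IsCover U)
    (K n : ℕ) (hK : 1 ≤ K)
    (R : Fin K → Finset (Set X))
    (hR : ∀ l, IsBorelPartition (R l)) (href : ∀ l, Refines (R l) U) :
    ∃ B : Finset X, coverNum (dynJoin T U n) / K ≤ B.card ∧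
      ∀ l : Fin K, ∀ A ∈ dynJoin T (R l) n,
        ∀ x ∈ B, ∀ y ∈ B, x ∈ A → y ∈ A → x = y := by
  classical
  have hRpart : ∀ l, IsPartition (dynJoin T (R l) n) :=
    fun l => isPartition_dynJoin T (hR l).1 n
  have hRcov : ∀ l : Fin K, ∀ x : X, ∃ A ∈ dynJoin T (R l) n, x ∈ A :=
    fun l => isCover_iff.mp (hRpart l).1
  have hrefl : ∀ l, Refines (dynJoin T (R l) n) (dynJoin T U n) :=
    fun l => refines_dynJoin T (href l) n
  choose atom hatomMem hatomx using hRcov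
  have atomUniq : ∀ (l : Fin K) (x : X) (A : Set X),
      A ∈ dynJoin T (R l) n → x ∈ A → A = atom l x := by
    intro l x A hA hx
    by_contra hne
    exact Set.disjoint_left.mp ((hRpart l).2 A hA _ (hatomMem l x) hne) hx (hatomx l x)
  set S : Set ℕ := {m | ∃ B : Finset X,
    (∀ l : Fin K, ∀ A ∈ dynJoin T (R l) n,
      ∀ x ∈ B, ∀ y ∈ B, x ∈ A → y ∈ A → x = y) ∧ B.card = m} with hSdef
  have hS0 : 0 ∈ S :=
    ⟨∅, fun l A hA x hx => absurd hx (Finset.notMem_empty x), rfl⟩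
  have l0 : Fin K := ⟨0, hK⟩
  have hbdd : BddAbove S := by
    refine ⟨(dynJoin T (R l0) n).card, ?_⟩
    rintro m ⟨B, hB, rfl⟩
    apply Finset.card_le_card_of_injOn (fun x => atom l0 x)
    · intro x _; exact hatomMem l0 x
    · intro x hx y hy hxy
      have hxy' : atom l0 x = atom l0 y := hxy
      have hyx : y ∈ atom l0 x := by rw [hxy']; exact hatomx l0 y
      exact hB l0 (atom l0 x) (hatomMem l0 x) x hx y hy (hatomx l0 x) hyx
  obtain ⟨B, hB, hcard⟩ := Nat.sSup_mem ⟨0, hS0⟩ hbdd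
  have hmax : ∀ y : X, ∃ x ∈ B, ∃ l : Fin K, y ∈ atom l x := by
    intro y
    by_contra hy
    push_neg at hy
    have hyB : y ∉ B := fun h => hy y h l0 (hatomx l0 y)
    have hgood' : ∀ l : Fin K, ∀ A ∈ dynJoin T (R l) n,
        ∀ u ∈ insert y B, ∀ v ∈ insert y B, u ∈ A → v ∈ A → u = v := by
      intro l A hA u hu v hv huA hvA
      have hAu : A = atom l u := atomUniq l u A hA huA
      have hAv : A = atom l v := atomUniq l v A hA hvA
      rcases Finset.mem_insert.mp hu with hu' | hu'
      · rcases Finset.mem_insert.mp hv with hv' | hv'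
        · rw [hu', hv']
        · exact absurd (show y ∈ atom l v by rw [← hAv, ← hu']; exact huA) (hy v hv' l)
      · rcases Finset.mem_insert.mp hv with hv' | hv'
        · exact absurd (show y ∈ atom l u by rw [← hAu, ← hv']; exact hvA) (hy u hu' l)
        · exact hB l A hA u hu' v hv' huA hvA
    have h1 : (insert y B).card ∈ S := ⟨insert y B, hgood', rfl⟩
    have h2 := le_csSup hbdd h1
    rw [Finset.card_insert_of_notMem hyB, hcard] at h2
    omega
  choose C hCmem hCsub using fun (l : Fin K) (x : X) => hrefl l (atom l x) (hatomMem l x)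
  set F : Finset (Set X) :=
    Finset.image (fun p : Fin K × X => C p.1 p.2) (Finset.univ ×ˢ B) with hFdef
  have hFsub : F ⊆ dynJoin T U n := by
    intro A hA
    rw [hFdef, Finset.mem_image] at hA
    obtain ⟨⟨l, x⟩, _, rfl⟩ := hA
    exact hCmem l x
  have hFcov : ⋃₀ (F : Set (Set X)) = Set.univ := by
    rw [Set.sUnion_eq_univ_iff]
    intro y
    obtain ⟨x, hx, l, hyl⟩ := hmax y
    refine ⟨C l x, ?_, hCsub l x hyl⟩
    rw [hFdef]
    exact Finset.mem_image.mpr ⟨(l, x), Finset.mem_product.mpr ⟨Finset.mem_univ l, hx⟩, rfl⟩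
  have hN : coverNum (dynJoin T U n) ≤ F.card :=
    Nat.sInf_le ⟨F, hFsub, rfl, hFcov⟩
  have hFcard : F.card ≤ B.card * K := by
    calc F.card ≤ (Finset.univ ×ˢ B).card := Finset.card_image_le
      _ = K * B.card := by rw [Finset.card_product, Finset.card_univ, Fintype.card_fin]
      _ = B.card * K := Nat.mul_comm _ _
  refine ⟨B, ?_, hB⟩
  calc coverNum (dynJoin T U n) / K ≤ (B.card * K) / K :=
        Nat.div_le_div_right (hN.trans hFcard)
    _ = B.card := Nat.mul_div_cancel _ (by omega)
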